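/- arXiv:math/0205044 — 4 statements merged into one kernel-verified Lean document; each statement's English description precedes it below -/
import Mathlib

section
/- Let f be a C^1 random dynamical system on T^d over (Ω, F, P, T), let μ be an f-invariant ergodic measure of full support on Ω × T^d, and suppose f has τ-polynomial growth of the derivative with limit function g = lim n^{-τ} Df^n. Then for μ-a.e. (ω, x) ∈ Ω × T^d and every integer n: g(ω, x) ≠ 0, g(ω, x)^2 = 0, and g(ω, x) = g(T^n ω, f^n_ω x) · Df^n_ω(x). Moreover, for μ ⊗ μ-a.e. (ω, x, υ, y) ∈ (Ω × T^d)^2: g(ω, x) · g(υ, y) = 0 and g(ω, x) = Df_υ(y) · g(ω, x). -/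
open MeasureTheory Filter Topology Matrix

noncomputable section

/-- The circle `ℝ/ℤ`. -/
abbrev 𝕋 : Type := AddCircle (1 : ℝ)

/-- Projection of `ℝ^d` onto the torus `𝕋^d`. -/
def Tproj {d : ℕ} (x : Fin d → ℝ) : Fin d → 𝕋 := fun i => (x i : 𝕋)

/-- The `d×d` matrix of partial derivatives of a map `F : ℝ^d → ℝ^d` at a point. -/
def Dmat {d : ℕ} (F : (Fin d → ℝ) → (Fin d → ℝ)) (x : Fin d → ℝ) :
    Matrix (Fin d) (Fin d) ℝ :=
  Matrix.of fun i j => fderiv ℝ (fun y => F y i) x (Pi.single j 1)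

/-!
Write `S_n (ω, x) = (Tⁿω, fⁿ_ω x)` and `Dⁿ(ω, x) = Dfⁿ_ω(x)`, so that
`D^{m+n}(p) = D^m(S_n p) · D^n(p)`. Comparing `n^{-τ} D^{n+k}(p)` with `n^{-τ} D^n(S_k p) · D^k(p)`
gives `g(p) = g(S_k p) · D^k(p)`, since a fixed time shift does not change `n^{-τ}`-asymptotics.
In particular `{g = 0}` is invariant, hence null by ergodicity.

For the products, fix `p`. Along its orbit `D^m(S_n p) · n^{-τ} D^n(p) = n^{-τ} D^{n+m}(p) → g(p)`,
and by Poincaré recurrence and ergodicity the values `D^m(S_n p)` accumulate at `D^m(q)` for a.e.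
`q`; hence `D^m(q) g(p) = g(p)`, and letting `m → ∞` after multiplying by `m^{-τ}` gives
`g(q) g(p) = 0`. Finally the smallest subspace containing the range of a.e. `g(p)` lies in the
kernel of a.e. `g(q)`, so `g(p)² = 0`.
-/

theorem Ergodic.ae_frequently_iterate_mem {X : Type*} [MeasurableSpace X] {μ : Measure X}
    [IsFiniteMeasure μ] {T : X → X} (hT : Ergodic T μ) {s : Set X} (hs : MeasurableSet s)
    (h0 : μ s ≠ 0) : ∀ᵐ x ∂μ, ∃ᶠ n in atTop, T^[n] x ∈ s := by
  set t := limsup (fun n => T^[n] ⁻¹' s) atTop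
  have hmem : ∀ x, x ∈ t ↔ ∃ᶠ n in atTop, T^[n] x ∈ s := fun x => mem_limsup_iff_frequently_mem
  have ht : MeasurableSet t :=
    MeasurableSet.measurableSet_limsup fun n => hs.preimage (hT.measurable.iterate n)
  have hinv : T ⁻¹' t = t := by
    ext x
    rw [Set.mem_preimage, hmem, hmem]
    conv_rhs => rw [← map_add_atTop_eq_nat 1, frequently_map]
    rfl
  have hst : ∀ᵐ x ∂μ, x ∈ s → x ∈ t := by
    simpa only [hmem] using
      hT.toMeasurePreserving.conservative.ae_mem_imp_frequently_image_mem hs.nullMeasurableSet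
  rcases hT.ae_empty_or_univ_of_preimage_ae_le ht.nullMeasurableSet hinv.le.eventuallyLE with h | h
  · exact absurd (measure_mono_null_ae hst (ae_eq_empty.1 h)) h0
  · exact (show ∀ᵐ x ∂μ, x ∈ t from mem_ae_iff.2 (ae_eq_univ.1 h)).mono fun x hx => (hmem x).1 hx

theorem Ergodic.ae_prod_mapClusterPt_iterate {X Y : Type*} [MeasurableSpace X] {μ : Measure X}
    [IsFiniteMeasure μ] {T : X → X} (hT : Ergodic T μ) [TopologicalSpace Y]
    [SecondCountableTopology Y] [MeasurableSpace Y] [OpensMeasurableSpace Y] {D : X → Y}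
    (hD : Measurable D) :
    ∀ᵐ z ∂μ.prod μ, MapClusterPt (D z.2) atTop fun n => D (T^[n] z.1) := by
  have hU : ∀ U ∈ TopologicalSpace.countableBasis Y,
      ∀ᵐ z ∂μ.prod μ, D z.2 ∈ U → ∃ᶠ n in atTop, D (T^[n] z.1) ∈ U := by
    intro U hU
    have hUm : MeasurableSet (D ⁻¹' U) :=
      hD (TopologicalSpace.isOpen_of_mem_countableBasis hU).measurableSet
    rcases eq_or_ne (μ (D ⁻¹' U)) 0 with h0 | h0
    · filter_upwards [Measure.quasiMeasurePreserving_snd.ae (measure_eq_zero_iff_ae_notMem.1 h0)]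
        with z hz hzU using absurd hzU hz
    · filter_upwards [Measure.quasiMeasurePreserving_fst.ae (hT.ae_frequently_iterate_mem hUm h0)]
        with z hz _ using hz
  filter_upwards [(ae_ball_iff (TopologicalSpace.countable_countableBasis Y)).2 hU] with z hz
  rw [((TopologicalSpace.isBasis_countableBasis Y).nhds_hasBasis).mapClusterPt_iff_frequently]
  exact fun U ⟨hU, hzU⟩ => hz U hU hzU

theorem MapClusterPt.mul_eq_of_tendsto {M : Type*} [TopologicalSpace M] [Mul M] [ContinuousMul M]
    [T2Space M] {b a : ℕ → M} {B A : M} (hb : MapClusterPt B atTop b) (ha : Tendsto a atTop (𝓝 A))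
    (hba : Tendsto (fun n => b n * a n) atTop (𝓝 A)) : B * A = A := by
  by_contra hne
  obtain ⟨U, V, hU, hV, hUV⟩ := t2_separation_nhds hne
  obtain ⟨s, hs, t, ht, hst⟩ := mem_nhds_prod_iff.1 (continuous_mul.continuousAt (x := (B, A)) hU)
  obtain ⟨n, hbn, han, hn⟩ :=
    ((hb.frequently hs).and_eventually ((ha.eventually ht).and (hba.eventually hV))).exists
  exact hUV.ne_of_mem (hst (Set.mk_mem_prod hbn han)) hn rfl

theorem Submodule.exists_least_eventually_le {K V ι : Type*} [DivisionRing K] [AddCommGroup V]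
    [Module K V] [FiniteDimensional K V] (l : Filter ι) (v : ι → Submodule K V) :
    ∃ W : Submodule K V, (∀ᶠ i in l, v i ≤ W) ∧ ∀ W', (∀ᶠ i in l, v i ≤ W') → W ≤ W' := by
  obtain ⟨W, hW, hmin⟩ := WellFounded.has_min wellFounded_lt {W | ∀ᶠ i in l, v i ≤ W}
    ⟨⊤, Eventually.of_forall fun _ => le_top⟩
  refine ⟨W, hW, fun W' hW' => ?_⟩
  have hinf : W ⊓ W' ∈ {W | ∀ᶠ i in l, v i ≤ W} := (hW.and hW').mono fun _ h => le_inf h.1 h.2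
  exact inf_eq_left.1 (eq_of_le_of_not_lt inf_le_left (hmin _ hinf))

theorem ae_mul_self_eq_zero_of_ae_prod {X ι K : Type*} [MeasurableSpace X] {μ : Measure X}
    [SFinite μ] [Fintype ι] [DecidableEq ι] [Field K] {A : X → Matrix ι ι K}
    (h : ∀ᵐ z ∂μ.prod μ, A z.1 * A z.2 = 0) : ∀ᵐ p ∂μ, A p * A p = 0 := by
  have hmul : ∀ M N : Matrix ι ι K, M * N = 0 ↔
      LinearMap.range (Matrix.toLin' N) ≤ LinearMap.ker (Matrix.toLin' M) := fun M N => by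
    rw [LinearMap.range_le_ker_iff, ← Matrix.toLin'_mul, LinearEquiv.map_eq_zero_iff]
  obtain ⟨W, hW, hleast⟩ :=
    Submodule.exists_least_eventually_le (ae μ) fun p => LinearMap.range (Matrix.toLin' (A p))
  have hker : ∀ᵐ q ∂μ, W ≤ LinearMap.ker (Matrix.toLin' (A q)) := by
    filter_upwards [Measure.ae_ae_of_ae_prod h] with q hq
    exact hleast _ (hq.mono fun p hp => (hmul _ _).1 hp)
  filter_upwards [hW, hker] with p h1 h2
  exact (hmul _ _).2 (h1.trans h2)

theorem tendsto_rpow_inv_smul_add {E : Type*} [TopologicalSpace E] [AddCommGroup E] [Module ℝ E]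
    [ContinuousSMul ℝ E] {τ : ℝ} {u : ℤ → E} {L : E}
    (h : Tendsto (fun n : ℕ => ((n : ℝ) ^ τ)⁻¹ • u n) atTop (𝓝 L)) (k : ℤ) :
    Tendsto (fun n : ℕ => ((n : ℝ) ^ τ)⁻¹ • u (n + k)) atTop (𝓝 L) := by
  set w : ℕ → ℕ := fun n => ((n : ℤ) + k).toNat
  have hw : Tendsto w atTop atTop :=
    tendsto_atTop_atTop.2 fun b => ⟨b + k.natAbs, fun n hn => by simp only [w]; omega⟩
  have hwn : ∀ᶠ n : ℕ in atTop, ((w n : ℤ) = n + k) ∧ 0 < n ∧ 0 < w n :=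
    eventually_ge_atTop (k.natAbs + 1) |>.mono fun n hn => by simp only [w]; omega
  have hratio : Tendsto (fun n : ℕ => ((w n : ℝ) / n) ^ τ) atTop (𝓝 1) := by
    have h1 : Tendsto (fun n : ℕ => 1 + (k : ℝ) / n) atTop (𝓝 1) := by
      simpa using (tendsto_const_div_atTop_nhds_zero_nat (k : ℝ)).const_add 1
    have h2 : Tendsto (fun n : ℕ => (w n : ℝ) / n) atTop (𝓝 1) := by
      refine h1.congr' (hwn.mono fun n ⟨hwk, hn, _⟩ => ?_)
      have : (w n : ℝ) = n + k := by exact_mod_cast hwk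
      show _ = (w n : ℝ) / n
      rw [this]
      field_simp
    simpa using h2.rpow_const (Or.inl one_ne_zero)
  have hlim : Tendsto (fun n => ((w n : ℝ) / n) ^ τ • (((w n : ℝ) ^ τ)⁻¹ • u (w n))) atTop (𝓝 L) :=
    by simpa using hratio.smul (h.comp hw)
  refine hlim.congr' (hwn.mono fun n ⟨hwk, hn, hwpos⟩ => ?_)
  have hn' : (0 : ℝ) < n := by exact_mod_cast hn
  have hw' : (0 : ℝ) < w n := by exact_mod_cast hwpos
  simp only [smul_smul, hwk]
  congr 1
  rw [Real.div_rpow hw'.le hn'.le]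
  field_simp [(Real.rpow_pos_of_pos hw' τ).ne']

section Cocycle

variable {X : Type*} {S : ℤ → X → X}

theorem iterate_eq_of_add (h0 : ∀ p, S 0 p = p) (hadd : ∀ m n p, S (m + n) p = S m (S n p))
    (n : ℕ) (p : X) : (S 1)^[n] p = S n p := by
  induction n with
  | zero => exact (h0 p).symm
  | succ n ih => rw [Function.iterate_succ_apply', ih, ← hadd, Nat.cast_succ, add_comm]

variable [MeasurableSpace X] {μ : Measure X}

theorem measurePreserving_of_add (h0 : ∀ p, S 0 p = p)
    (hadd : ∀ m n p, S (m + n) p = S m (S n p)) (h1 : MeasurePreserving (S 1) μ μ)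
    (hm1 : Measurable (S (-1))) (n : ℤ) : MeasurePreserving (S n) μ μ := by
  have hcomp : ∀ m n, S (m + n) = S m ∘ S n := fun m n => funext (hadd m n)
  have hinv : MeasurePreserving (S (-1)) μ μ := by
    refine ⟨hm1, ?_⟩
    conv_lhs => rw [← h1.map_eq]
    rw [Measure.map_map hm1 h1.measurable, ← hcomp, neg_add_cancel, show S 0 = id from funext h0,
      Measure.map_id]
  induction n using Int.induction_on with
  | zero => exact (funext h0 : S 0 = id) ▸ MeasurePreserving.id μ
  | succ k ih => rw [add_comm, hcomp]; exact h1.comp ih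
  | pred k ih => rw [sub_eq_neg_add, hcomp]; exact hinv.comp ih

variable {d : ℕ} {D : ℤ → X → Matrix (Fin d) (Fin d) ℝ} {g : X → Matrix (Fin d) (Fin d) ℝ} {τ : ℝ}

theorem ae_forall_eq_mul_of_tendsto (hS : ∀ n, MeasurePreserving (S n) μ μ)
    (hD : ∀ m n p, D (m + n) p = D m (S n p) * D n p)
    (hconv : ∀ᵐ p ∂μ, Tendsto (fun n : ℕ => ((n : ℝ) ^ τ)⁻¹ • D n p) atTop (𝓝 (g p))) :
    ∀ᵐ p ∂μ, ∀ k : ℤ, g p = g (S k p) * D k p := by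
  have hconvS : ∀ k, ∀ᵐ p ∂μ,
      Tendsto (fun n : ℕ => ((n : ℝ) ^ τ)⁻¹ • D n (S k p)) atTop (𝓝 (g (S k p))) :=
    fun k => (hS k).quasiMeasurePreserving.ae hconv
  filter_upwards [hconv, ae_all_iff.2 hconvS] with p hp hpS k
  refine tendsto_nhds_unique (tendsto_rpow_inv_smul_add (u := (D · p)) hp k)
    (((hpS k).mul_const (D k p)).congr fun n => ?_)
  rw [hD, smul_mul_assoc]

theorem Ergodic.ae_ne_zero_of_ae_eq_mul [IsFiniteMeasure μ] {T : X → X} (hT : Ergodic T μ)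
    {A : X → Matrix (Fin d) (Fin d) ℝ} (hg : ∀ i j, Measurable fun p => g p i j)
    (hgA : ∀ᵐ p ∂μ, g p = g (T p) * A p) (hg0 : ¬∀ᵐ p ∂μ, g p = 0) : ∀ᵐ p ∂μ, g p ≠ 0 := by
  have hZ : MeasurableSet {p | g p = 0} := by
    have : {p | g p = 0} = ⋂ i, ⋂ j, {p | g p i j = 0} := by ext p; simp [← Matrix.ext_iff]
    rw [this]
    exact .iInter fun i => .iInter fun j => measurableSet_eq_fun (hg i j) measurable_const
  have hsub : T ⁻¹' {p | g p = 0} ≤ᵐ[μ] {p | g p = 0} := by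
    filter_upwards [hgA] with p hp (hTp : g (T p) = 0)
    show g p = 0
    rw [hp, hTp, Matrix.zero_mul]
  rcases hT.ae_empty_or_univ_of_preimage_ae_le hZ.nullMeasurableSet hsub with h | h
  · exact measure_eq_zero_iff_ae_notMem.1 (ae_eq_empty.1 h)
  · exact absurd (mem_ae_iff.2 (ae_eq_univ.1 h)) hg0

theorem ae_prod_mul_eq_of_tendsto [IsFiniteMeasure μ] (h0 : ∀ p, S 0 p = p)
    (hadd : ∀ m n p, S (m + n) p = S m (S n p)) (hT : Ergodic (S 1) μ)
    (hD : ∀ m n p, D (m + n) p = D m (S n p) * D n p)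
    (hDmeas : ∀ n i j, Measurable fun p => D n p i j)
    (hconv : ∀ᵐ p ∂μ, Tendsto (fun n : ℕ => ((n : ℝ) ^ τ)⁻¹ • D n p) atTop (𝓝 (g p))) (m : ℕ) :
    ∀ᵐ z ∂μ.prod μ, D m z.2 * g z.1 = g z.1 := by
  have hDm : Measurable fun p i j => D m p i j :=
    measurable_pi_lambda _ fun i => measurable_pi_lambda _ fun j => hDmeas m i j
  -- Matrices carry no `MeasurableSpace` instance, so the orbit is viewed in `Fin d → Fin d → ℝ`.
  filter_upwards [hT.ae_prod_mapClusterPt_iterate (Y := Fin d → Fin d → ℝ) hDm,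
    Measure.quasiMeasurePreserving_fst.ae hconv] with z hz hgz
  refine MapClusterPt.mul_eq_of_tendsto (b := fun n : ℕ => D m (S n z.1)) ?_ hgz
    ((tendsto_rpow_inv_smul_add (u := (D · z.1)) hgz m).congr fun n => ?_)
  · simp only [iterate_eq_of_add h0 hadd] at hz
    exact hz
  · rw [mul_smul_comm, ← hD, add_comm]

theorem ae_prod_mul_eq_zero_of_tendsto [SFinite μ] (hτ : 0 < τ)
    (hDg : ∀ m : ℕ, ∀ᵐ z ∂μ.prod μ, D m z.2 * g z.1 = g z.1)
    (hconv : ∀ᵐ p ∂μ, Tendsto (fun n : ℕ => ((n : ℝ) ^ τ)⁻¹ • D n p) atTop (𝓝 (g p))) :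
    ∀ᵐ z ∂μ.prod μ, g z.2 * g z.1 = 0 := by
  filter_upwards [ae_all_iff.2 hDg, Measure.quasiMeasurePreserving_snd.ae hconv] with z hz hgz
  have hscale : Tendsto (fun n : ℕ => ((n : ℝ) ^ τ)⁻¹) atTop (𝓝 0) :=
    ((tendsto_rpow_atTop hτ).comp tendsto_natCast_atTop_atTop).inv_tendsto_atTop
  refine tendsto_nhds_unique (hgz.mul_const (g z.1)) ?_
  simpa [smul_mul_assoc, hz] using hscale.smul_const (g z.1)

end Cocycle

section Torus

variable {d : ℕ}

theorem Tproj_surjective : Function.Surjective (Tproj (d := d)) :=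
  fun χ => ⟨fun i => (χ i).out, funext fun i => QuotientAddGroup.out_eq' (χ i)⟩

theorem Tproj_add (x y : Fin d → ℝ) : Tproj (x + y) = Tproj x + Tproj y := rfl

theorem Tproj_sub (x y : Fin d → ℝ) : Tproj (x - y) = Tproj x - Tproj y := rfl

theorem eq_add_const_of_Tproj_comp_eq {F₁ F₂ : (Fin d → ℝ) → Fin d → ℝ} (h₁ : Continuous F₁)
    (h₂ : Continuous F₂) (h : ∀ x, Tproj (F₁ x) = Tproj (F₂ x)) :
    F₁ = fun x => F₂ x + (F₁ 0 - F₂ 0) := by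
  funext x
  ext i
  have hmem : ∀ y, F₁ y i - F₂ y i ∈ AddSubgroup.zmultiples (1 : ℝ) := fun y =>
    QuotientAddGroup.eq_iff_sub_mem.1 (congrFun (h y) i)
  have hconst := PreconnectedSpace.constant (α := Fin d → ℝ) inferInstance
    (f := fun y => (⟨F₁ y i - F₂ y i, hmem y⟩ : AddSubgroup.zmultiples (1 : ℝ)))
    (by fun_prop) (x := x) (y := 0)
  have := congrArg Subtype.val hconst
  simp only at this
  simp only [Pi.add_apply, Pi.sub_apply]
  linarith

theorem Dmat_add_const (F : (Fin d → ℝ) → Fin d → ℝ) (c : Fin d → ℝ) :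
    Dmat (fun x => F x + c) = Dmat F := by
  funext x
  ext i j
  simp only [Dmat, Matrix.of_apply, Pi.add_apply, fderiv_add_const]

theorem Dmat_eq_of_Tproj_comp_eq {F₁ F₂ : (Fin d → ℝ) → Fin d → ℝ} (h₁ : Continuous F₁)
    (h₂ : Continuous F₂) (h : ∀ x, Tproj (F₁ x) = Tproj (F₂ x)) : Dmat F₁ = Dmat F₂ := by
  rw [eq_add_const_of_Tproj_comp_eq h₁ h₂ h, Dmat_add_const]

theorem Dmat_eq_toMatrix' {F : (Fin d → ℝ) → Fin d → ℝ} {x : Fin d → ℝ}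
    (hF : DifferentiableAt ℝ F x) :
    Dmat F x = LinearMap.toMatrix' (fderiv ℝ F x : (Fin d → ℝ) →ₗ[ℝ] Fin d → ℝ) := by
  ext i j
  rw [Dmat, Matrix.of_apply, LinearMap.toMatrix'_apply, (hasFDerivAt_pi'.1 hF.hasFDerivAt i).fderiv]
  rfl

theorem Dmat_comp {F G : (Fin d → ℝ) → Fin d → ℝ} {x : Fin d → ℝ} (hG : DifferentiableAt ℝ G (F x))
    (hF : DifferentiableAt ℝ F x) : Dmat (G ∘ F) x = Dmat G (F x) * Dmat F x := by
  rw [Dmat_eq_toMatrix' (hG.comp x hF), Dmat_eq_toMatrix' hG, Dmat_eq_toMatrix' hF,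
    fderiv_comp x hG hF, ContinuousLinearMap.toLinearMap_comp, LinearMap.toMatrix'_comp]

theorem Dmat_comp_of_Tproj_comp_eq {F G H : (Fin d → ℝ) → Fin d → ℝ} (hF : Differentiable ℝ F)
    (hG : Differentiable ℝ G) (hH : Continuous H) (h : ∀ x, Tproj (H x) = Tproj (G (F x)))
    (x : Fin d → ℝ) : Dmat H x = Dmat G (F x) * Dmat F x := by
  rw [Dmat_eq_of_Tproj_comp_eq hH (hG.continuous.comp hF.continuous) h]
  exact Dmat_comp (hG (F x)) (hF x)

theorem cocycle_of_lift {Ω : Type*} {θ : ℤ → Ω → Ω} {f : ℤ → Ω → (Fin d → 𝕋) → Fin d → 𝕋}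
    {F : ℤ → Ω → (Fin d → ℝ) → Fin d → ℝ} {D : ℤ → Ω → (Fin d → 𝕋) → Matrix (Fin d) (Fin d) ℝ}
    (hF : ∀ n ω, Differentiable ℝ (F n ω)) (hf : ∀ m n ω y, f (m + n) ω y = f m (θ n ω) (f n ω y))
    (hlift : ∀ n ω x, f n ω (Tproj x) = Tproj (F n ω x))
    (hD : ∀ n ω x, D n ω (Tproj x) = Dmat (F n ω) x) (m n : ℤ) (ω : Ω) (χ : Fin d → 𝕋) :
    D (m + n) ω χ = D m (θ n ω) (f n ω χ) * D n ω χ := by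
  obtain ⟨x, rfl⟩ := Tproj_surjective χ
  rw [hD, hlift, hD, hD]
  exact Dmat_comp_of_Tproj_comp_eq (hF n ω) (hF m _) (hF (m + n) ω).continuous
    (fun y => by rw [← hlift, hf, hlift, hlift]) x

instance : Fact ((0 : ℝ) < 1) := ⟨one_pos⟩

def circleRep (θ : 𝕋) : ℝ := AddCircle.measurableEquivIoc 1 (-(1 / 2)) θ

theorem measurable_circleRep : Measurable circleRep :=
  measurable_subtype_coe.comp (AddCircle.measurableEquivIoc 1 (-(1 / 2))).measurable

theorem circleRep_coe {r : ℝ} (hr : |r| < 1 / 2) : circleRep r = r := by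
  show toIocMod one_pos (-(1 / 2)) r = r
  rw [toIocMod_eq_self]
  constructor <;> linarith [abs_lt.1 hr]

theorem tendsto_circleRep_diffQuot {f : (Fin d → 𝕋) → Fin d → 𝕋} {F : (Fin d → ℝ) → Fin d → ℝ}
    (hlift : ∀ x, f (Tproj x) = Tproj (F x)) {x : Fin d → ℝ} (hF : DifferentiableAt ℝ F x)
    (i j : Fin d) :
    Tendsto (fun m : ℕ => ((m : ℝ) + 1) * circleRep
      ((f (Tproj x + Tproj (((m : ℝ) + 1)⁻¹ • Pi.single j 1)) - f (Tproj x)) i))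
      atTop (𝓝 (Dmat F x i j)) := by
  have hc : Tendsto (fun m : ℕ => (m : ℝ) + 1) atTop atTop :=
    tendsto_atTop_add_const_right _ 1 tendsto_natCast_atTop_atTop
  set Δ : ℕ → ℝ := fun m => F (x + ((m : ℝ) + 1)⁻¹ • Pi.single j 1) i - F x i
  have hΔ : Tendsto Δ atTop (𝓝 0) := by
    have hx : Tendsto (fun m : ℕ => x + ((m : ℝ) + 1)⁻¹ • (Pi.single j 1 : Fin d → ℝ)) atTop
        (𝓝 x) := by
      simpa using tendsto_const_nhds.add (hc.inv_tendsto_atTop.smul_const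
        (Pi.single j 1 : Fin d → ℝ))
    have := ((continuous_apply i).tendsto _).comp (hF.continuousAt.tendsto.comp hx)
    simpa [Δ] using this.sub_const (F x i)
  have hlim := (differentiableAt_pi.1 hF i).hasFDerivAt.lim (Pi.single j 1 : Fin d → ℝ)
    (tendsto_norm_atTop_atTop.comp hc)
  refine hlim.congr' ?_
  filter_upwards [hΔ.eventually (eventually_abs_sub_lt 0 (by norm_num : (0 : ℝ) < 1 / 2))]
    with m hm
  rw [← Tproj_add, hlift, hlift, ← Tproj_sub]
  exact congrArg _ (circleRep_coe (by simpa using hm)).symm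

-- Only the torus maps are jointly measurable, so the derivative is read off difference quotients
-- taken on the torus.
theorem measurable_entry_of_lift {Ω : Type*} [MeasurableSpace Ω]
    {f : Ω → (Fin d → 𝕋) → Fin d → 𝕋} {F : Ω → (Fin d → ℝ) → Fin d → ℝ}
    {D : Ω → (Fin d → 𝕋) → Matrix (Fin d) (Fin d) ℝ}
    (hf : Measurable fun q : Ω × (Fin d → 𝕋) => f q.1 q.2) (hF : ∀ ω, Differentiable ℝ (F ω))
    (hlift : ∀ ω x, f ω (Tproj x) = Tproj (F ω x)) (hD : ∀ ω x, D ω (Tproj x) = Dmat (F ω) x)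
    (i j : Fin d) : Measurable fun q : Ω × (Fin d → 𝕋) => D q.1 q.2 i j := by
  refine measurable_of_tendsto_metrizable (f := fun (m : ℕ) (q : Ω × (Fin d → 𝕋)) =>
    ((m : ℝ) + 1) * circleRep ((f q.1 (q.2 + Tproj (((m : ℝ) + 1)⁻¹ • Pi.single j 1))
      - f q.1 q.2) i)) (fun m => ?_) (tendsto_pi_nhds.2 fun q => ?_)
  · exact (measurable_circleRep.comp ((measurable_pi_apply i).comp
      ((hf.comp (measurable_fst.prodMk (measurable_snd.add_const _))).sub hf))).const_mul _
  · obtain ⟨x, hx⟩ := Tproj_surjective q.2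
    rw [← hx, hD]
    exact tendsto_circleRep_diffQuot (hlift q.1) (hF q.1 x) i j

end Torus

theorem stmt_4_general
    {Ω : Type*} [MeasurableSpace Ω]
    (P : Measure Ω)
    (Te : Equiv.Perm Ω)
    (hTesymm : MeasurePreserving (⇑Te.symm) P P)
    (d : ℕ)
    -- the two-sided C¹ RDS on 𝕋^d: lifts and induced torus maps of all iterates
    (fiter : ℤ → Ω → (Fin d → ℝ) → (Fin d → ℝ))
    (fiterT : ℤ → Ω → (Fin d → 𝕋) → (Fin d → 𝕋))
    (hmeas : ∀ n : ℤ, Measurable fun q : Ω × (Fin d → 𝕋) => fiterT n q.1 q.2)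
    (hC1 : ∀ (n : ℤ) ω, ContDiff ℝ 1 (fiter n ω))
    (hid : ∀ ω, fiterT 0 ω = id)
    (hcocycle : ∀ (m n : ℤ) ω (y : Fin d → 𝕋),
      fiterT (m + n) ω y = fiterT m ((Te ^ n) ω) (fiterT n ω y))
    (hlift : ∀ (n : ℤ) ω (x : Fin d → ℝ), fiterT n ω (Tproj x) = Tproj (fiter n ω x))
    -- μ: an f-invariant ergodic measure with marginal P and full support
    (μ : Measure (Ω × (Fin d → 𝕋))) [IsProbabilityMeasure μ]
    (herg : Ergodic (fun p : Ω × (Fin d → 𝕋) => (Te p.1, fiterT 1 p.1 p.2)) μ)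
    -- τ-polynomial growth of the derivative, with limit function g
    (τ : ℝ) (hτ : 0 < τ)
    (Dn : ℤ → Ω → (Fin d → 𝕋) → Matrix (Fin d) (Fin d) ℝ)
    (hDn : ∀ (n : ℤ) ω (x : Fin d → ℝ), Dn n ω (Tproj x) = Dmat (fiter n ω) x)
    (g : Ω × (Fin d → 𝕋) → Matrix (Fin d) (Fin d) ℝ)
    (hgmeas : ∀ i j, Measurable fun p => g p i j)
    (hconv : ∀ᵐ p ∂μ,
      Tendsto (fun n : ℕ => ((n : ℝ) ^ τ)⁻¹ • Dn (n : ℤ) p.1 p.2) atTop (𝓝 (g p)))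
    (hgne : ∃ S : Set (Ω × (Fin d → 𝕋)), MeasurableSet S ∧ 0 < μ S ∧
      ∀ p ∈ S, g p ≠ 0) :
    (∀ᵐ p ∂μ, g p ≠ 0 ∧ g p * g p = 0 ∧
      ∀ n : ℤ, g p = g ((Te ^ n) p.1, fiterT n p.1 p.2) * Dn n p.1 p.2) ∧
    (∀ᵐ q ∂(μ.prod μ),
      g q.1 * g q.2 = 0 ∧ g q.1 = Dn 1 q.2.1 q.2.2 * g q.1) := by
  set S : ℤ → Ω × (Fin d → 𝕋) → Ω × (Fin d → 𝕋) := fun n p => ((Te ^ n) p.1, fiterT n p.1 p.2)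
  set D : ℤ → Ω × (Fin d → 𝕋) → Matrix (Fin d) (Fin d) ℝ := fun n p => Dn n p.1 p.2
  have hdiff : ∀ n ω, Differentiable ℝ (fiter n ω) := fun n ω =>
    (hC1 n ω).differentiable one_ne_zero
  have hS0 : ∀ p, S 0 p = p := fun p => by simp [S, hid]
  have hSadd : ∀ m n p, S (m + n) p = S m (S n p) := fun m n p => by
    simp [S, _root_.zpow_add, hcocycle]
  have hS1 : Ergodic (S 1) μ := by simpa [S] using herg
  have hSm1 : Measurable (S (-1)) := by
    have hinv : ⇑(Te ^ (-1 : ℤ)) = ⇑Te.symm := by rw [_root_.zpow_neg_one, Equiv.Perm.inv_def]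
    simp only [S, hinv]
    exact (hTesymm.measurable.comp measurable_fst).prodMk (hmeas (-1))
  have hD : ∀ m n p, D (m + n) p = D m (S n p) * D n p := fun m n p =>
    cocycle_of_lift hdiff hcocycle hlift hDn m n p.1 p.2
  have hDmeas : ∀ n i j, Measurable fun p => D n p i j := fun n =>
    measurable_entry_of_lift (hmeas n) (hdiff n) (hlift n) (hDn n)
  have hgco := ae_forall_eq_mul_of_tendsto
    (measurePreserving_of_add hS0 hSadd hS1.toMeasurePreserving hSm1) hD hconv
  have hg0 : ¬∀ᵐ p ∂μ, g p = 0 := fun h => by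
    obtain ⟨A, -, hApos, hAg⟩ := hgne
    exact hApos.ne' (measure_eq_zero_iff_ae_notMem.2 (h.mono fun p hp hpA => hAg p hpA hp))
  have hDg := ae_prod_mul_eq_of_tendsto hS0 hSadd hS1 hD hDmeas hconv
  have hgg : ∀ᵐ z ∂μ.prod μ, g z.1 * g z.2 = 0 :=
    Measure.measurePreserving_swap.quasiMeasurePreserving.ae
      (ae_prod_mul_eq_zero_of_tendsto hτ hDg hconv)
  refine ⟨?_, ?_⟩
  · filter_upwards [hS1.ae_ne_zero_of_ae_eq_mul hgmeas (hgco.mono fun p hp => hp 1) hg0,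
      ae_mul_self_eq_zero_of_ae_prod hgg, hgco] with p h1 h2 h3 using ⟨h1, h2, h3⟩
  · filter_upwards [hgg, hDg 1] with z h1 h2 using ⟨h1, h2.symm⟩

/-- Let `f` be a `C¹` random dynamical system on `𝕋^d` over an
ergodic automorphism `Te` of a Lebesgue probability space `(Ω,P)` (given by its
two-sided cocycle of iterates `f^n_ω`, `n ∈ ℤ`, with lifts `fiter n ω`), let `μ` be
an `f`-invariant ergodic measure of full support with marginal `P`, and suppose `f`
has `τ`-polynomial growth of the derivative with limit function `g`.  Then for
`μ`-a.e. `(ω,x)` and every `n ∈ ℤ`:  `g(ω,x) ≠ 0`, `g(ω,x)² = 0` and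
`g(ω,x) = g(Teⁿω, f^n_ω x) · Df^n_ω(x)`; moreover for `μ ⊗ μ`-a.e. `(ω,x,υ,y)`:
`g(ω,x)·g(υ,y) = 0` and `g(ω,x) = Df_υ(y)·g(ω,x)`. -/
theorem stmt_4
    {Ω : Type*} [MeasurableSpace Ω] [StandardBorelSpace Ω]
    (P : Measure Ω) [IsProbabilityMeasure P]
    (Te : Equiv.Perm Ω) (hTe : Ergodic (⇑Te) P)
    (hTesymm : MeasurePreserving (⇑Te.symm) P P)
    (d : ℕ)
    -- the two-sided C¹ RDS on 𝕋^d: lifts and induced torus maps of all iterates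
    (fiter : ℤ → Ω → (Fin d → ℝ) → (Fin d → ℝ))
    (fiterT : ℤ → Ω → (Fin d → 𝕋) → (Fin d → 𝕋))
    (hmeas : ∀ n : ℤ, Measurable fun q : Ω × (Fin d → 𝕋) => fiterT n q.1 q.2)
    (hC1 : ∀ (n : ℤ) ω, ContDiff ℝ 1 (fiter n ω))
    (hid : ∀ ω, fiterT 0 ω = id)
    (hcocycle : ∀ (m n : ℤ) ω (y : Fin d → 𝕋),
      fiterT (m + n) ω y = fiterT m ((Te ^ n) ω) (fiterT n ω y))
    (hlift : ∀ (n : ℤ) ω (x : Fin d → ℝ), fiterT n ω (Tproj x) = Tproj (fiter n ω x))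
    -- μ: an f-invariant ergodic measure with marginal P and full support
    (μ : Measure (Ω × (Fin d → 𝕋))) [IsProbabilityMeasure μ]
    (hmarg : μ.map Prod.fst = P)
    (herg : Ergodic (fun p : Ω × (Fin d → 𝕋) => (Te p.1, fiterT 1 p.1 p.2)) μ)
    (hfull : ∀ U : Set (Fin d → 𝕋), IsOpen U → U.Nonempty →
      ∀ A : Set Ω, MeasurableSet A → 0 < P A → 0 < μ (A ×ˢ U))
    -- τ-polynomial growth of the derivative, with limit function g
    (τ : ℝ) (hτ : 0 < τ)
    (Dn : ℤ → Ω → (Fin d → 𝕋) → Matrix (Fin d) (Fin d) ℝ)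
    (hDn : ∀ (n : ℤ) ω (x : Fin d → ℝ), Dn n ω (Tproj x) = Dmat (fiter n ω) x)
    (g : Ω × (Fin d → 𝕋) → Matrix (Fin d) (Fin d) ℝ)
    (hgmeas : ∀ i j, Measurable fun p => g p i j)
    (hconv : ∀ᵐ p ∂μ,
      Tendsto (fun n : ℕ => ((n : ℝ) ^ τ)⁻¹ • Dn (n : ℤ) p.1 p.2) atTop (𝓝 (g p)))
    (hgne : ∃ S : Set (Ω × (Fin d → 𝕋)), MeasurableSet S ∧ 0 < μ S ∧
      ∀ p ∈ S, g p ≠ 0) :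
    (∀ᵐ p ∂μ, g p ≠ 0 ∧ g p * g p = 0 ∧
      ∀ n : ℤ, g p = g ((Te ^ n) p.1, fiterT n p.1 p.2) * Dn n p.1 p.2) ∧
    (∀ᵐ q ∂(μ.prod μ),
      g q.1 * g q.2 = 0 ∧ g q.1 = Dn 1 q.2.1 q.2.2 * g q.1) :=
  stmt_4_general P Te hTesymm d fiter fiterT hmeas hC1 hid hcocycle hlift μ herg τ hτ Dn hDn g
    hgmeas hconv hgne

end
end

section
/- Suppose A and B are non-zero real 3×3 matrices such that A^2 = B^2 = AB = BA = 0. Then there exist three non-zero vectors a, b, c ∈ R^3 (viewed as 1×3 matrices) such that either A = a^T b and B = a^T c with b a^T = 0 and c a^T = 0, or A = a^T c and B = b^T c with c a^T = 0 and c b^T = 0. -/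
/-!
A nonzero square-zero `3 × 3` matrix has rank `1` (since `2 rank A ≤ 3`), so `A = aᵀb` and
`B = uᵀv`, and the four products vanishing say exactly that `b` and `v` are orthogonal to both
`a` and `u`. If `a` and `u` are proportional we are in the first case; otherwise the vectors
orthogonal to both are the multiples of `a × u`, so `v` is proportional to `b` and we are in the
second case.
-/

open Matrix

section RankOne

variable {K m n : Type*} [Field K] [Fintype m] [Fintype n]

theorem Matrix.exists_eq_vecMulVec_of_rank_le_one {A : Matrix m n K} (hA : A.rank ≤ 1) :
    ∃ a b, A = vecMulVec a b := by
  rw [rank_eq_finrank_span_cols, Submodule.finrank_le_one_iff_isPrincipal] at hA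
  obtain ⟨a, ha⟩ := hA.principal
  have hcol : ∀ j, ∃ c : K, c • a = A.col j := fun j =>
    Submodule.mem_span_singleton.mp (ha ▸ Submodule.subset_span ⟨j, rfl⟩)
  choose b hb using hcol
  refine ⟨a, b, ext fun i j => ?_⟩
  rw [vecMulVec_apply, mul_comm, ← smul_eq_mul, ← Pi.smul_apply, hb, col_apply]

theorem Matrix.exists_eq_vecMulVec_of_mul_self_eq_zero {A : Matrix n n K}
    (hn : Fintype.card n ≤ 3) (hA : A ≠ 0) (hA2 : A * A = 0) :
    ∃ a b, a ≠ 0 ∧ b ≠ 0 ∧ A = vecMulVec a b := by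
  have := rank_add_rank_le_card_of_mul_eq_zero hA2
  obtain ⟨a, b, rfl⟩ := exists_eq_vecMulVec_of_rank_le_one (A := A) (by omega)
  obtain ⟨ha, hb⟩ : a ≠ 0 ∧ b ≠ 0 := by simpa [not_or] using hA
  exact ⟨a, b, ha, hb, rfl⟩

theorem Matrix.dotProduct_eq_zero_of_vecMulVec_mul_vecMulVec_eq_zero {a b u v : n → K}
    (ha : a ≠ 0) (hv : v ≠ 0) (h : vecMulVec a b * vecMulVec u v = 0) : b ⬝ᵥ u = 0 := by
  simpa [vecMulVec_mul_vecMulVec, ha, hv] using h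

end RankOne

section CrossProduct

variable {K : Type*} [Field K]

theorem exists_smul_eq_of_cross_eq_zero {x y : Fin 3 → K} (hx : x ≠ 0) (h : x ⨯₃ y = 0) :
    ∃ t : K, t • x = y := by
  by_contra! hxy
  exact crossProduct_ne_zero_iff_linearIndependent.mpr
    ((LinearIndependent.pair_iff' hx).mpr hxy) h

theorem cross_cross_eq_zero_of_dotProduct_eq_zero {a u b : Fin 3 → K}
    (ha : b ⬝ᵥ a = 0) (hu : b ⬝ᵥ u = 0) : b ⨯₃ (a ⨯₃ u) = 0 := by
  rw [cross_cross_eq_smul_sub_smul', hu, dotProduct_comm, ha, zero_smul, zero_smul, sub_zero]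

theorem exists_smul_eq_of_dotProduct_eq_zero {a u b v : Fin 3 → K}
    (hau : LinearIndependent K ![a, u]) (hb : b ≠ 0) (hba : b ⬝ᵥ a = 0) (hbu : b ⬝ᵥ u = 0)
    (hva : v ⬝ᵥ a = 0) (hvu : v ⬝ᵥ u = 0) : ∃ s : K, s • b = v := by
  have hw := crossProduct_ne_zero_iff_linearIndependent.mpr hau
  have hbw := cross_cross_eq_zero_of_dotProduct_eq_zero hba hbu
  have hvw := cross_cross_eq_zero_of_dotProduct_eq_zero hva hvu
  rw [← cross_anticomm, neg_eq_zero] at hbw hvw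
  obtain ⟨t, rfl⟩ := exists_smul_eq_of_cross_eq_zero hw hbw
  obtain ⟨r, rfl⟩ := exists_smul_eq_of_cross_eq_zero hw hvw
  have ht : t ≠ 0 := by rintro rfl; simp at hb
  exact ⟨r / t, by rw [smul_smul, div_mul_cancel₀ r ht]⟩

end CrossProduct

/-- If `A` and `B` are non-zero real `3×3` matrices with
`A² = B² = AB = BA = 0`, then there are three non-zero vectors `a, b, c ∈ ℝ³`
(viewed as row vectors) such that either `A = aᵀb`, `B = aᵀc` with `b·a = 0`, `c·a = 0`,
or `A = aᵀc`, `B = bᵀc` with `c·a = 0`, `c·b = 0`. -/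
theorem stmt_8 (A B : Matrix (Fin 3) (Fin 3) ℝ) (hA : A ≠ 0) (hB : B ≠ 0)
    (hA2 : A * A = 0) (hB2 : B * B = 0) (hAB : A * B = 0) (hBA : B * A = 0) :
    ∃ a b c : Fin 3 → ℝ, a ≠ 0 ∧ b ≠ 0 ∧ c ≠ 0 ∧
      ((A = vecMulVec a b ∧ B = vecMulVec a c ∧ b ⬝ᵥ a = 0 ∧ c ⬝ᵥ a = 0) ∨
       (A = vecMulVec a c ∧ B = vecMulVec b c ∧ c ⬝ᵥ a = 0 ∧ c ⬝ᵥ b = 0)) := by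
  obtain ⟨a, b, ha, hb, rfl⟩ := exists_eq_vecMulVec_of_mul_self_eq_zero le_rfl hA hA2
  obtain ⟨u, v, hu, hv, rfl⟩ := exists_eq_vecMulVec_of_mul_self_eq_zero le_rfl hB hB2
  have hba := dotProduct_eq_zero_of_vecMulVec_mul_vecMulVec_eq_zero ha hb hA2
  have hvu := dotProduct_eq_zero_of_vecMulVec_mul_vecMulVec_eq_zero hu hv hB2
  have hbu := dotProduct_eq_zero_of_vecMulVec_mul_vecMulVec_eq_zero ha hv hAB
  have hva := dotProduct_eq_zero_of_vecMulVec_mul_vecMulVec_eq_zero hu hb hBA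
  by_cases hau : LinearIndependent ℝ ![a, u]
  · obtain ⟨s, rfl⟩ := exists_smul_eq_of_dotProduct_eq_zero hau hb hba hbu hva hvu
    have hs : s ≠ 0 := by rintro rfl; simp at hv
    refine ⟨a, s • u, b, ha, smul_ne_zero hs hu, hb, Or.inr ⟨rfl, ?_, hba, ?_⟩⟩
    · rw [smul_vecMulVec, vecMulVec_smul]
    · rw [dotProduct_smul, hbu, smul_zero]
  · obtain ⟨t, rfl⟩ : ∃ t : ℝ, t • a = u := by
      simpa [LinearIndependent.pair_iff' ha] using hau
    have ht : t ≠ 0 := by rintro rfl; simp at hu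
    refine ⟨a, b, t • v, ha, hb, smul_ne_zero ht hv, Or.inl ⟨rfl, ?_, hba, ?_⟩⟩
    · rw [smul_vecMulVec, vecMulVec_smul]
    · rw [smul_dotProduct, hva, smul_zero]
end

section
/- Let h : R^2 → R be continuous, let a, b ∈ R^3 be linearly independent vectors, and let c ∈ R^3 be a non-zero vector orthogonal to both a and b. Suppose there exists d ∈ R^3 such that h(x1 + a·m, x2 + b·m) = h(x1, x2) + d·m for all m ∈ Z^3 and all (x1, x2) ∈ R^2. Then there exist k1, k2 ∈ R such that d = k1 a + k2 b, and the function h̃(x1, x2) = h(x1, x2) − k1 x1 − k2 x2 is (a·m, b·m)-periodic for all m ∈ Z^3, i.e. h̃(x1 + a·m, x2 + b·m) = h̃(x1, x2). Moreover: if rank G(c) = 0 then h̃ is constant; if rank G(c) = 1 then there exist l1, l2 ∈ R and a continuous function ρ : T → R such that h̃(x1, x2) = ρ(l1 x1 + l2 x2) and l1 a + l2 b ∈ Z^3 generates G(c); if rank G(c) = 2 then c ∈ c' Z^3 for some real c' ≠ 0. -/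
/-!
Write `T m = (a ⬝ᵥ m, b ⬝ᵥ m)` for `m ∈ ℤ³`. Rounding `n c` to a lattice point gives integer
vectors `m` with `T m` bounded while `c ⬝ᵥ m → ∞`. Since `h` is bounded on compact sets, this
forces `d ⊥ c`, so `d = k₁ a + k₂ b` and `h̃` is invariant under the lattice `T ℤ³`. The periods of
the continuous function `h̃` then form a closed subgroup `H ⊇ T ℤ³` of `ℝ²`.

If no integer vector is parallel to `c` (as happens when `rank G(c) ≤ 1`), `T` is injective on
`ℤ³`, so those bounded points `T m` are infinitely many and `H` has arbitrarily short non-zero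
elements. By compactness of the unit circle, `H` then contains a line. A closed subgroup of `ℝ²`
containing a line is either `ℝ²` or contains a line `l ⬝ v = 0` while `l(H) ⊆ ℤ`; in the latter
case `l₁ a + l₂ b` is a non-zero vector of `G(c)`. In rank 0 this is impossible, so `h̃` is
constant. In rank 1 it is a multiple of the generator `m₀ = λ₁ a + λ₂ b`, so `h̃` is constant along
the lines `λ ⬝ v = const`, and `ρ t = h̃ (t • T m₁)` for some `m₁` with `m₀ ⬝ᵥ m₁ = 1`. In rank 2,
the cross product of two independent vectors of `G(c)` is an integer vector parallel to `c`.
-/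

open Matrix

open Filter Topology Metric

noncomputable section

section Periods
variable {E F : Type*} [AddCommGroup E]

def periods (U : E → F) : AddSubgroup E where
  carrier := {p | Function.Periodic U p}
  zero_mem' := fun x => by rw [add_zero]
  add_mem' := Function.Periodic.add_period
  neg_mem' := Function.Periodic.neg

theorem mem_periods {U : E → F} {p : E} : p ∈ periods U ↔ ∀ x, U (x + p) = U x := Iff.rfl

theorem isClosed_periods [TopologicalSpace E] [ContinuousAdd E] [TopologicalSpace F] [T2Space F]
    {U : E → F} (hU : Continuous U) : IsClosed (periods U : Set E) := by
  have : (periods U : Set E) = ⋂ x, {p | U (x + p) = U x} := by ext; simp [mem_periods]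
  rw [this]
  exact isClosed_iInter fun x => isClosed_eq (by fun_prop) continuous_const

theorem eq_of_periods_eq_top {U : E → F} (hU : periods U = ⊤) (x y : E) : U x = U y := by
  have hx := mem_periods.mp (hU ▸ AddSubgroup.mem_top (x - y)) y
  rwa [add_sub_cancel] at hx

theorem exists_periodic_comp_of_ker_le_periods [Module ℝ E] [TopologicalSpace E]
    [ContinuousSMul ℝ E] [TopologicalSpace F] {U : E → F} (hU : Continuous U) (φ : E →ₗ[ℝ] ℝ)
    (hker : ∀ v, φ v = 0 → v ∈ periods U) {p : E} (hp : p ∈ periods U) (hφp : φ p = 1) :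
    ∃ ρ : ℝ → F, Continuous ρ ∧ Function.Periodic ρ 1 ∧ ∀ x, U x = ρ (φ x) := by
  refine ⟨fun t => U (t • p), by fun_prop, fun t => ?_, fun x => ?_⟩
  · simpa [add_smul] using hp (t • p)
  · have hx : φ (x - φ x • p) = 0 := by simp [hφp]
    simpa using hker _ hx (φ x • p)

end Periods

section ClosedSubgroups
variable {E : Type*} [NormedAddCommGroup E]

theorem AddSubgroup.exists_ne_zero_norm_lt_of_infinite [ProperSpace E] (H : AddSubgroup E)
    {S : Set E} (hSH : S ⊆ H) (hS : S.Infinite) (hSb : Bornology.IsBounded S) {ε : ℝ}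
    (hε : 0 < ε) : ∃ v ∈ H, v ≠ 0 ∧ ‖v‖ < ε := by
  obtain ⟨x, -, hx⟩ :=
    hS.exists_accPt_of_subset_isCompact hSb.isCompact_closure _root_.subset_closure
  rw [accPt_iff_nhds] at hx
  obtain ⟨y, ⟨hy, hyS⟩, hyx⟩ := hx (ball x (ε / 2)) (ball_mem_nhds _ (by positivity))
  obtain ⟨z, ⟨hz, hzS⟩, -⟩ := hx (ball x (dist y x)) (ball_mem_nhds _ (dist_pos.2 hyx))
  rw [mem_ball] at hy hz
  refine ⟨y - z, H.sub_mem (hSH hyS) (hSH hzS), sub_ne_zero.2 ?_, ?_⟩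
  · rintro rfl
    exact lt_irrefl _ hz
  · rw [← dist_eq_norm]
    linarith [dist_triangle_right y z x]

theorem AddSubgroup.exists_smul_mem_of_forall_exists_norm_lt [NormedSpace ℝ E] [ProperSpace E]
    {H : AddSubgroup E} (hH : IsClosed (H : Set E))
    (hsmall : ∀ ε > 0, ∃ v ∈ H, v ≠ 0 ∧ ‖v‖ < ε) : ∃ w : E, w ≠ 0 ∧ ∀ t : ℝ, t • w ∈ H := by
  choose v hvH hv0 hvε using fun n : ℕ => hsmall (1 / (n + 1)) Nat.one_div_pos_of_nat
  have hv_pos : ∀ n, 0 < ‖v n‖ := fun n => norm_pos_iff.2 (hv0 n)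
  have hv_lim : Tendsto (fun n => ‖v n‖) atTop (𝓝 0) :=
    squeeze_zero (fun n => norm_nonneg _) (fun n => (hvε n).le)
      tendsto_one_div_add_atTop_nhds_zero_nat
  obtain ⟨w, hw, φ, hφ, hw_lim⟩ := (isCompact_sphere (0 : E) 1).tendsto_subseq
    (x := fun n => ‖v n‖⁻¹ • v n) fun n => by simp [norm_smul, (hv_pos n).ne']
  refine ⟨w, ne_zero_of_mem_unit_sphere ⟨w, hw⟩, fun t => ?_⟩
  -- `⌊t / ‖v‖⌋ • v ∈ H` lies within `‖v‖` of `t • (‖v‖⁻¹ • v)`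
  have hfloor : Tendsto (fun n => (⌊t / ‖v (φ n)‖⌋ : ℝ) * ‖v (φ n)‖) atTop (𝓝 t) := by
    refine tendsto_sub_nhds_zero_iff.1 (squeeze_zero_norm (fun n => ?_)
      (hv_lim.comp hφ.tendsto_atTop))
    have hr := hv_pos (φ n)
    have h₁ := Int.floor_le (t / ‖v (φ n)‖)
    have h₂ := Int.lt_floor_add_one (t / ‖v (φ n)‖)
    rw [le_div_iff₀ hr] at h₁
    rw [div_lt_iff₀ hr, add_mul, one_mul] at h₂
    rw [Real.norm_eq_abs, abs_le]
    constructor <;> simp only [Function.comp_apply] <;> linarith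
  refine hH.mem_of_tendsto (f := fun n => ⌊t / ‖v (φ n)‖⌋ • v (φ n))
    ((hfloor.smul hw_lim).congr fun n => ?_)
    (Eventually.of_forall fun n => H.zsmul_mem (hvH (φ n)) _)
  simp only [Function.comp_apply, smul_smul, mul_assoc, mul_inv_cancel₀ (hv_pos (φ n)).ne',
    mul_one, Int.cast_smul_eq_zsmul]

end ClosedSubgroups

theorem AddSubgroup.eq_top_or_exists_ne_zero_forall_eq_int_mul {S : AddSubgroup ℝ}
    (hS : IsClosed (S : Set ℝ)) : S = ⊤ ∨ ∃ g : ℝ, g ≠ 0 ∧ ∀ s ∈ S, ∃ k : ℤ, s = k * g := by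
  rcases S.dense_or_cyclic with hd | ⟨g, hg⟩
  · exact .inl (SetLike.coe_injective (by rw [← hS.closure_eq, hd.closure_eq]; rfl))
  right
  rcases eq_or_ne g 0 with rfl | hg0
  · refine ⟨1, one_ne_zero, fun s hs => ⟨0, ?_⟩⟩
    simpa [hg, AddSubgroup.closure_singleton_zero] using hs
  · refine ⟨g, hg0, fun s hs => ?_⟩
    obtain ⟨k, rfl⟩ := AddSubgroup.mem_closure_singleton.1 (hg ▸ hs)
    exact ⟨k, zsmul_eq_mul _ _⟩

theorem AddSubgroup.eq_top_or_exists_ker_le_of_smul_mem {H : AddSubgroup (ℝ × ℝ)}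
    (hH : IsClosed (H : Set (ℝ × ℝ))) {w : ℝ × ℝ} (hw : w ≠ 0) (hline : ∀ t : ℝ, t • w ∈ H) :
    H = ⊤ ∨ ∃ l₁ l₂ : ℝ, (l₁, l₂) ≠ 0 ∧ (∀ v : ℝ × ℝ, l₁ * v.1 + l₂ * v.2 = 0 → v ∈ H) ∧
      ∀ v ∈ H, ∃ k : ℤ, l₁ * v.1 + l₂ * v.2 = k := by
  have hN : w.1 ^ 2 + w.2 ^ 2 ≠ 0 := by
    contrapose! hw
    obtain ⟨h₁, h₂⟩ := (add_eq_zero_iff_of_nonneg (sq_nonneg _) (sq_nonneg _)).1 hw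
    exact Prod.ext (pow_eq_zero_iff two_ne_zero |>.1 h₁) (pow_eq_zero_iff two_ne_zero |>.1 h₂)
  -- `(v₀, w)` is a basis of `ℝ²` and `ℓ v` is the `v₀`-coordinate of `v`
  set v₀ : ℝ × ℝ := (w.2 / (w.1 ^ 2 + w.2 ^ 2), -w.1 / (w.1 ^ 2 + w.2 ^ 2))
  set ℓ : ℝ × ℝ → ℝ := fun v => w.2 * v.1 - w.1 * v.2
  have hmem : ∀ v, v ∈ H ↔ ℓ v • v₀ ∈ H := fun v => by
    obtain ⟨t, hv⟩ : ∃ t : ℝ, v = ℓ v • v₀ + t • w :=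
      ⟨(w.1 * v.1 + w.2 * v.2) / (w.1 ^ 2 + w.2 ^ 2), by
        ext <;> simp [ℓ, v₀] <;> field_simp <;> ring⟩
    constructor <;> intro h
    · convert H.sub_mem h (hline t) using 1
      rw [eq_sub_iff_add_eq, ← hv]
    · rw [hv]
      exact H.add_mem h (hline t)
  let S : AddSubgroup ℝ := H.comap (smulAddHom ℝ (ℝ × ℝ) |>.flip v₀)
  have hS : IsClosed (S : Set ℝ) := hH.preimage (continuous_id.smul continuous_const)
  rcases S.eq_top_or_exists_ne_zero_forall_eq_int_mul hS with hStop | ⟨g, hg0, hgS⟩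
  · exact .inl (eq_top_iff.2 fun v _ => (hmem v).2 (show ℓ v ∈ S from hStop ▸ trivial))
  right
  refine ⟨w.2 / g, -w.1 / g, ?_, fun v hv => (hmem v).2 ?_, fun v hv => ?_⟩
  · contrapose! hw
    simp only [Prod.mk_eq_zero, div_eq_zero_iff, neg_eq_zero, hg0, or_false] at hw
    exact Prod.ext hw.2 hw.1
  · have : ℓ v = 0 := by
      field_simp at hv
      linear_combination hv
    rw [this, zero_smul]
    exact H.zero_mem
  · obtain ⟨k, hk⟩ := hgS _ ((hmem v).1 hv)
    refine ⟨k, ?_⟩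
    field_simp
    linear_combination hk

section LinearAlgebra
variable {a b c : Fin 3 → ℝ}

theorem exists_smul_add_smul_eq_of_dotProduct_eq_zero (hab : LinearIndependent ℝ ![a, b])
    (hc : c ≠ 0) (hca : c ⬝ᵥ a = 0) (hcb : c ⬝ᵥ b = 0) {u : Fin 3 → ℝ} (hu : c ⬝ᵥ u = 0) :
    ∃ p q : ℝ, p • a + q • b = u := by
  classical
  set f := dotProductEquiv ℝ (Fin 3) c
  have hf : f ≠ 0 := (LinearEquiv.map_ne_zero_iff _).2 hc
  have hle : Submodule.span ℝ (Set.range ![a, b]) ≤ LinearMap.ker f := by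
    rw [Submodule.span_le, Set.range_subset_iff]
    intro i
    fin_cases i <;> simpa [f]
  have hrank : Module.finrank ℝ (Submodule.span ℝ (Set.range ![a, b])) =
      Module.finrank ℝ (LinearMap.ker f) := by
    have := Module.Dual.finrank_ker_add_one_of_ne_zero hf
    rw [finrank_span_eq_card hab]
    simp only [Module.finrank_fin_fun, Fintype.card_fin] at this ⊢
    omega
  have hmem : u ∈ Submodule.span ℝ (Set.range ![a, b]) :=
    (Submodule.eq_of_le_of_finrank_eq hle hrank).symm ▸ (show u ∈ LinearMap.ker f by simpa [f])
  obtain ⟨r, hr⟩ := Submodule.mem_span_range_iff_exists_fun ℝ |>.1 hmem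
  exact ⟨r 0, r 1, by simpa [Fin.sum_univ_two] using hr⟩

theorem exists_eq_smul_of_dotProduct_eq_zero (hab : LinearIndependent ℝ ![a, b])
    (hc : c ≠ 0) (hca : c ⬝ᵥ a = 0) (hcb : c ⬝ᵥ b = 0) {u : Fin 3 → ℝ} (hua : u ⬝ᵥ a = 0)
    (hub : u ⬝ᵥ b = 0) : ∃ r : ℝ, u = r • c := by
  have hcc : c ⬝ᵥ c ≠ 0 := fun h => hc (dotProduct_self_eq_zero.1 h)
  set r := (c ⬝ᵥ u) / (c ⬝ᵥ c)
  -- `u - r • c` is orthogonal to `c`, hence lies in the span of `a, b`, to which it is orthogonal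
  obtain ⟨p, q, hpq⟩ := exists_smul_add_smul_eq_of_dotProduct_eq_zero hab hc hca hcb
    (u := u - r • c) (by simp [r, dotProduct_sub, hcc])
  have hav : a ⬝ᵥ (u - r • c) = 0 := by
    rw [dotProduct_comm, sub_dotProduct, smul_dotProduct, hua, hca, smul_zero, sub_zero]
  have hbv : b ⬝ᵥ (u - r • c) = 0 := by
    rw [dotProduct_comm, sub_dotProduct, smul_dotProduct, hub, hcb, smul_zero, sub_zero]
  have hv : (u - r • c) ⬝ᵥ (u - r • c) = 0 := by
    nth_rewrite 1 [← hpq]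
    simp only [add_dotProduct, smul_dotProduct, hav, hbv, smul_zero, add_zero]
  exact ⟨r, sub_eq_zero.1 (dotProduct_self_eq_zero.1 hv)⟩

end LinearAlgebra

theorem Int.cast_dotProduct {ι R : Type*} [Fintype ι] [Ring R] (m w : ι → ℤ) :
    ((m ⬝ᵥ w : ℤ) : R) = (fun i => (m i : R)) ⬝ᵥ fun i => (w i : R) := by
  simp [dotProduct]

theorem exists_pair_orthogonal {R : Type*} [CommRing R] [LinearOrder R] [IsStrictOrderedRing R]
    {m : Fin 3 → R} (hm : m ≠ 0) : ∃ w₁ w₂ : Fin 3 → R, w₁ ≠ 0 ∧ w₂ ≠ 0 ∧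
      m ⬝ᵥ w₁ = 0 ∧ m ⬝ᵥ w₂ = 0 ∧ w₁ ⬝ᵥ w₂ = 0 := by
  obtain ⟨w, hw, hmw⟩ := exists_ne_zero_dotProduct_eq_zero m
  rw [dotProduct_comm] at hmw
  refine ⟨w, m ⨯₃ w, hw, fun h => ?_, hmw, dot_self_cross m w, dot_cross_self m w⟩
  have := cross_dot_cross m w m w
  rw [h, zero_dotProduct, hmw, zero_mul, sub_zero, eq_comm, mul_eq_zero] at this
  rcases this with h | h
  exacts [hm (dotProduct_self_eq_zero.1 h), hw (dotProduct_self_eq_zero.1 h)]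

theorem exists_dotProduct_eq_one {ι : Type*} [Fintype ι] {m : ι → ℤ}
    (hm : ∀ (k : ℤ) (w : ι → ℤ), m = k • w → IsUnit k) : ∃ m₁ : ι → ℤ, m ⬝ᵥ m₁ = 1 := by
  classical
  choose w hw using fun i => Finset.gcd_dvd (f := m) (Finset.mem_univ i)
  obtain ⟨u, hu⟩ := (hm _ w (funext hw)).exists_right_inv
  obtain ⟨f, hf⟩ := Finset.gcd_eq_sum_mul Finset.univ m
  exact ⟨u • f, by rw [dotProduct_smul, dotProduct, ← hf, smul_eq_mul, mul_comm, hu]⟩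

theorem abs_dotProduct_round_smul_sub_le {ι : Type*} [Fintype ι] (v u : ι → ℝ) (t : ℝ) :
    |v ⬝ᵥ (fun i => (round (t * u i) : ℝ)) - t * (v ⬝ᵥ u)| ≤ (∑ i, |v i|) / 2 := by
  rw [← smul_eq_mul, ← dotProduct_smul, ← dotProduct_sub, dotProduct, Finset.sum_div]
  refine (Finset.abs_sum_le_sum_abs _ _).trans (Finset.sum_le_sum fun i _ => ?_)
  rw [Pi.sub_apply, Pi.smul_apply, smul_eq_mul, abs_mul, abs_sub_comm, div_eq_mul_one_div]
  exact mul_le_mul_of_nonneg_left (abs_sub_round _) (abs_nonneg _)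

theorem dotProduct_round_smul_mem_closedBall {a b u : Fin 3 → ℝ} (hau : a ⬝ᵥ u = 0)
    (hbu : b ⬝ᵥ u = 0) (t : ℝ) :
    (a ⬝ᵥ (fun i => (round (t * u i) : ℝ)), b ⬝ᵥ (fun i => (round (t * u i) : ℝ))) ∈
      closedBall (0 : ℝ × ℝ) (max ((∑ i, |a i|) / 2) ((∑ i, |b i|) / 2)) := by
  have ha := abs_dotProduct_round_smul_sub_le a u t
  have hb := abs_dotProduct_round_smul_sub_le b u t
  rw [hau, mul_zero, sub_zero] at ha
  rw [hbu, mul_zero, sub_zero] at hb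
  rw [mem_closedBall_zero_iff, norm_prod_le_iff]
  exact ⟨ha.trans (le_max_left _ _), hb.trans (le_max_right _ _)⟩

theorem eq_zero_of_forall_nat_mul_abs_le {x C : ℝ} (h : ∀ n : ℕ, n * |x| ≤ C) : x = 0 := by
  by_contra hx
  obtain ⟨n, hn⟩ := exists_nat_gt (C / |x|)
  have := h n
  rw [div_lt_iff₀ (abs_pos.2 hx)] at hn
  linarith

theorem infinite_range_round_nat_mul {ι : Type*} [Fintype ι] {c : ι → ℝ} (hc : c ≠ 0) :
    (Set.range fun (k : ℕ) (i : ι) => round ((k : ℝ) * c i)).Infinite := by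
  refine Set.Infinite.of_image (fun m => c ⬝ᵥ fun i => (m i : ℝ))
    (Set.infinite_of_not_bddAbove ?_)
  rintro ⟨B, hB⟩
  have hcc : 0 < c ⬝ᵥ c := by simpa using dotProduct_star_self_pos_iff.2 hc
  obtain ⟨k, hk⟩ := exists_nat_gt ((B + (∑ i, |c i|) / 2) / (c ⬝ᵥ c))
  rw [div_lt_iff₀ hcc] at hk
  have h₁ := hB ⟨_, Set.mem_range_self k, rfl⟩
  have h₂ := (abs_le.1 (abs_dotProduct_round_smul_sub_le c c k)).1
  linarith

theorem dotProduct_eq_zero_of_quasiperiodic {h : ℝ → ℝ → ℝ}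
    (hcont : Continuous (Function.uncurry h)) {a b d u : Fin 3 → ℝ} (hau : a ⬝ᵥ u = 0)
    (hbu : b ⬝ᵥ u = 0)
    (hper : ∀ (m : Fin 3 → ℤ) (x₁ x₂ : ℝ),
      h (x₁ + a ⬝ᵥ fun i => (m i : ℝ)) (x₂ + b ⬝ᵥ fun i => (m i : ℝ))
        = h x₁ x₂ + d ⬝ᵥ fun i => (m i : ℝ)) :
    d ⬝ᵥ u = 0 := by
  obtain ⟨B, hB⟩ := (isCompact_closedBall (0 : ℝ × ℝ) _).exists_bound_of_continuousOn
    hcont.continuousOn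
  refine eq_zero_of_forall_nat_mul_abs_le (C := B + |h 0 0| + (∑ i, |d i|) / 2) fun n => ?_
  set m : Fin 3 → ℤ := fun i => round ((n : ℝ) * u i)
  have hm := hper m 0 0
  rw [zero_add, zero_add] at hm
  have hhm := hB _ (dotProduct_round_smul_mem_closedBall hau hbu n)
  rw [Function.uncurry_apply_pair, Real.norm_eq_abs, hm, abs_le] at hhm
  have hdm := abs_le.1 (abs_dotProduct_round_smul_sub_le d u n)
  rw [← Nat.abs_cast, ← abs_mul, abs_le]
  constructor <;> linarith [le_abs_self (h 0 0), neg_abs_le (h 0 0)]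

theorem injective_dotProduct_pair {a b c : Fin 3 → ℝ} (hab : LinearIndependent ℝ ![a, b])
    (hc : c ≠ 0) (hca : c ⬝ᵥ a = 0) (hcb : c ⬝ᵥ b = 0)
    (hpar : ∀ (m : Fin 3 → ℤ) (r : ℝ), (fun i => (m i : ℝ)) = r • c → m = 0) :
    Function.Injective fun m : Fin 3 → ℤ =>
      (a ⬝ᵥ (fun i => (m i : ℝ)), b ⬝ᵥ (fun i => (m i : ℝ))) := by
  intro m m' hmm'
  simp only [Prod.mk.injEq] at hmm'
  have hcast : (fun i => ((m - m') i : ℝ)) = (fun i => (m i : ℝ)) - fun i => (m' i : ℝ) := by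
    ext; simp
  obtain ⟨r, hr⟩ := exists_eq_smul_of_dotProduct_eq_zero hab hc hca hcb
    (u := fun i => ((m - m') i : ℝ))
    (by rw [hcast, dotProduct_comm, dotProduct_sub, hmm'.1, sub_self])
    (by rw [hcast, dotProduct_comm, dotProduct_sub, hmm'.2, sub_self])
  exact sub_eq_zero.1 (hpar _ r hr)

theorem AddSubgroup.eq_top_or_exists_ker_le_of_forall_dotProduct_mem {a b c : Fin 3 → ℝ}
    (hab : LinearIndependent ℝ ![a, b]) (hc : c ≠ 0) (hca : c ⬝ᵥ a = 0) (hcb : c ⬝ᵥ b = 0)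
    (hpar : ∀ (m : Fin 3 → ℤ) (r : ℝ), (fun i => (m i : ℝ)) = r • c → m = 0)
    {H : AddSubgroup (ℝ × ℝ)} (hH : IsClosed (H : Set (ℝ × ℝ)))
    (hT : ∀ m : Fin 3 → ℤ, (a ⬝ᵥ (fun i => (m i : ℝ)), b ⬝ᵥ (fun i => (m i : ℝ))) ∈ H) :
    H = ⊤ ∨ ∃ (l₁ l₂ : ℝ) (n : Fin 3 → ℤ), n ≠ 0 ∧ (fun i => (n i : ℝ)) = l₁ • a + l₂ • b ∧
      ∀ v : ℝ × ℝ, l₁ * v.1 + l₂ * v.2 = 0 → v ∈ H := by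
  set S : Set (ℝ × ℝ) :=
    (fun m : Fin 3 → ℤ => (a ⬝ᵥ (fun i => (m i : ℝ)), b ⬝ᵥ (fun i => (m i : ℝ)))) ''
      Set.range fun (k : ℕ) (i : Fin 3) => round ((k : ℝ) * c i)
  have hinf : S.Infinite := (infinite_range_round_nat_mul hc).image
    (injective_dotProduct_pair hab hc hca hcb hpar).injOn
  have hbdd : Bornology.IsBounded S := isBounded_closedBall.subset <| Set.image_subset_iff.2 <|
    Set.range_subset_iff.2 fun k => dotProduct_round_smul_mem_closedBall
      (dotProduct_comm a c ▸ hca) (dotProduct_comm b c ▸ hcb) k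
  have hsmall : ∀ ε > 0, ∃ v ∈ H, v ≠ 0 ∧ ‖v‖ < ε := fun ε hε =>
    H.exists_ne_zero_norm_lt_of_infinite (Set.image_subset_iff.2 fun m _ => hT m) hinf hbdd hε
  obtain ⟨w, hw, hline⟩ := AddSubgroup.exists_smul_mem_of_forall_exists_norm_lt hH hsmall
  refine (H.eq_top_or_exists_ker_le_of_smul_mem hH hw hline).imp_right ?_
  rintro ⟨l₁, l₂, hl, hker, hint⟩
  choose n hn using fun i => hint _ (hT (Pi.single i 1))
  have hn' : (fun i => (n i : ℝ)) = l₁ • a + l₂ • b := by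
    ext i
    rw [← hn i]
    simp [apply_ite, Pi.single_apply, dotProduct]
  refine ⟨l₁, l₂, n, fun h0 => hl ?_, hn', hker⟩
  have := LinearIndependent.pair_iff.1 hab l₁ l₂ (by rw [← hn', h0]; ext; simp)
  rw [this.1, this.2, Prod.mk_zero_zero]

theorem dotProduct_cast_eq_zero_of_cast_eq_smul {c : Fin 3 → ℝ} {m w : Fin 3 → ℤ} {r : ℝ}
    (hm : m ≠ 0) (hmc : (fun i => (m i : ℝ)) = r • c) (hw : m ⬝ᵥ w = 0) :
    (c ⬝ᵥ fun i => (w i : ℝ)) = 0 := by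
  have hr : r ≠ 0 := by
    rintro rfl
    exact hm (funext fun i => by simpa using congrFun hmc i)
  have : r * (c ⬝ᵥ fun i => (w i : ℝ)) = 0 := by
    rw [← smul_eq_mul, ← smul_dotProduct, ← hmc, ← Int.cast_dotProduct, hw, Int.cast_zero]
  exact (mul_eq_zero.1 this).resolve_left hr

theorem eq_zero_of_cast_eq_smul_of_forall_eq_zero {c : Fin 3 → ℝ}
    (hG : ∀ m : Fin 3 → ℤ, (c ⬝ᵥ fun i => (m i : ℝ)) = 0 → m = 0)
    (m : Fin 3 → ℤ) (r : ℝ) (hmc : (fun i => (m i : ℝ)) = r • c) : m = 0 := by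
  by_contra hm
  obtain ⟨w, hw, hwm⟩ := exists_ne_zero_dotProduct_eq_zero m
  exact hw (hG w (dotProduct_cast_eq_zero_of_cast_eq_smul hm hmc (dotProduct_comm w m ▸ hwm)))

theorem eq_zero_of_cast_eq_smul_of_forall_eq_zsmul {c : Fin 3 → ℝ} {m₀ : Fin 3 → ℤ}
    (hm₀ : m₀ ≠ 0) (hG : ∀ m : Fin 3 → ℤ, (c ⬝ᵥ fun i => (m i : ℝ)) = 0 → ∃ z : ℤ, m = z • m₀)
    (m : Fin 3 → ℤ) (r : ℝ) (hmc : (fun i => (m i : ℝ)) = r • c) : m = 0 := by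
  by_contra hm
  obtain ⟨w₁, w₂, hw₁, hw₂, h₁, h₂, h₁₂⟩ := exists_pair_orthogonal hm
  obtain ⟨z₁, rfl⟩ := hG w₁ (dotProduct_cast_eq_zero_of_cast_eq_smul hm hmc h₁)
  obtain ⟨z₂, rfl⟩ := hG w₂ (dotProduct_cast_eq_zero_of_cast_eq_smul hm hmc h₂)
  simp only [smul_dotProduct, dotProduct_smul, smul_eq_mul, mul_eq_zero] at h₁₂
  rcases h₁₂ with h | h | h
  · exact hw₂ (by rw [h, zero_smul])
  · exact hw₁ (by rw [h, zero_smul])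
  · exact hm₀ (dotProduct_self_eq_zero.1 h)

theorem exists_dotProduct_eq_one_of_forall_eq_zsmul {c : Fin 3 → ℝ} {m₀ : Fin 3 → ℤ}
    (hm₀ : m₀ ≠ 0) (hcm₀ : (c ⬝ᵥ fun i => (m₀ i : ℝ)) = 0)
    (hG : ∀ m : Fin 3 → ℤ, (c ⬝ᵥ fun i => (m i : ℝ)) = 0 → ∃ z : ℤ, m = z • m₀) :
    ∃ m₁ : Fin 3 → ℤ, m₀ ⬝ᵥ m₁ = 1 := by
  refine exists_dotProduct_eq_one fun k w hkw => ?_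
  have hk : k ≠ 0 := by
    rintro rfl
    exact hm₀ (by rw [hkw, zero_smul])
  have hcw : (c ⬝ᵥ fun i => (w i : ℝ)) = 0 := by
    have : (fun i => (m₀ i : ℝ)) = (k : ℝ) • fun i => (w i : ℝ) := by
      ext i; simp [hkw]
    rw [this, dotProduct_smul, smul_eq_mul] at hcm₀
    exact (mul_eq_zero.1 hcm₀).resolve_left (Int.cast_ne_zero.2 hk)
  obtain ⟨z, rfl⟩ := hG w hcw
  have : (k * z - 1) • m₀ = 0 := by rw [sub_smul, one_smul, ← smul_smul, ← hkw, sub_self]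
  exact IsUnit.of_mul_eq_one z (sub_eq_zero.1 ((smul_eq_zero.1 this).resolve_right hm₀))

theorem exists_eq_mul_int_of_linearIndependent {c : Fin 3 → ℝ} (hc : c ≠ 0)
    {m₁ m₂ : Fin 3 → ℤ} (h₁ : (c ⬝ᵥ fun i => (m₁ i : ℝ)) = 0)
    (h₂ : (c ⬝ᵥ fun i => (m₂ i : ℝ)) = 0)
    (hli : LinearIndependent ℝ ![fun i => (m₁ i : ℝ), fun i => (m₂ i : ℝ)]) :
    ∃ c' : ℝ, c' ≠ 0 ∧ ∀ i, ∃ z : ℤ, c i = c' * z := by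
  set n := m₁ ⨯₃ m₂
  have hn : (fun i => (n i : ℝ)) = (fun i => (m₁ i : ℝ)) ⨯₃ fun i => (m₂ i : ℝ) := by
    ext i; fin_cases i <;> simp [n, cross_apply]
  obtain ⟨r, hr⟩ := exists_eq_smul_of_dotProduct_eq_zero hli
    (c := fun i => (n i : ℝ)) (hn ▸ crossProduct_ne_zero_iff_linearIndependent.2 hli)
    (by rw [hn, dotProduct_comm, dot_self_cross]) (by rw [hn, dotProduct_comm, dot_cross_self])
    (u := c) h₁ h₂
  refine ⟨r, fun h0 => hc (by rw [hr, h0, zero_smul]), fun i => ⟨n i, ?_⟩⟩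
  simpa using congrFun hr i

theorem exists_periodic_of_forall_eq_zsmul {a b c : Fin 3 → ℝ}
    (hab : LinearIndependent ℝ ![a, b]) (hc : c ≠ 0) (hca : c ⬝ᵥ a = 0) (hcb : c ⬝ᵥ b = 0)
    {U : ℝ × ℝ → ℝ} (hU : Continuous U)
    (hT : ∀ m : Fin 3 → ℤ,
      (a ⬝ᵥ (fun i => (m i : ℝ)), b ⬝ᵥ (fun i => (m i : ℝ))) ∈ periods U)
    {m₀ : Fin 3 → ℤ} (hm₀ : m₀ ≠ 0) (hcm₀ : (c ⬝ᵥ fun i => (m₀ i : ℝ)) = 0)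
    (hG : ∀ m : Fin 3 → ℤ, (c ⬝ᵥ fun i => (m i : ℝ)) = 0 → ∃ z : ℤ, m = z • m₀) :
    ∃ (l₁ l₂ : ℝ) (ρ : ℝ → ℝ), Continuous ρ ∧ Function.Periodic ρ 1 ∧
      (∀ x, U x = ρ (l₁ * x.1 + l₂ * x.2)) ∧ (fun i => (m₀ i : ℝ)) = l₁ • a + l₂ • b := by
  obtain ⟨l₁, l₂, hl⟩ := exists_smul_add_smul_eq_of_dotProduct_eq_zero hab hc hca hcb hcm₀
  have hker : ∀ v : ℝ × ℝ, l₁ * v.1 + l₂ * v.2 = 0 → v ∈ periods U := by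
    rcases (periods U).eq_top_or_exists_ker_le_of_forall_dotProduct_mem hab hc hca hcb
      (eq_zero_of_cast_eq_smul_of_forall_eq_zsmul hm₀ hG) (isClosed_periods hU) hT with
      htop | ⟨k₁, k₂, n, -, hn, hker⟩
    · exact fun v _ => htop ▸ AddSubgroup.mem_top v
    obtain ⟨z, rfl⟩ := hG n (by simp [hn, dotProduct_add, hca, hcb])
    have hkl : k₁ • a + k₂ • b = (z : ℝ) • (l₁ • a + l₂ • b) := by
      rw [← hn, hl]
      ext i
      simp
    have hk := LinearIndependent.pair_iff.1 hab (k₁ - z * l₁) (k₂ - z * l₂) (by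
      linear_combination (norm := module) hkl)
    intro v hv
    apply hker
    linear_combination (v.1) * hk.1 + v.2 * hk.2 + z * hv
  obtain ⟨m₁, hm₁⟩ := exists_dotProduct_eq_one_of_forall_eq_zsmul hm₀ hcm₀ hG
  obtain ⟨ρ, hρ, hρper, hUρ⟩ := exists_periodic_comp_of_ker_le_periods hU
    (l₁ • LinearMap.fst ℝ ℝ ℝ + l₂ • LinearMap.snd ℝ ℝ ℝ) (by simpa using hker) (hT m₁) (by
      simp only [LinearMap.add_apply, LinearMap.smul_apply, LinearMap.fst_apply,
        LinearMap.snd_apply]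
      rw [← smul_dotProduct, ← smul_dotProduct, ← add_dotProduct, hl]
      rw [← Int.cast_dotProduct, hm₁, Int.cast_one])
  exact ⟨l₁, l₂, ρ, hρ, hρper, by simpa using hUρ, hl.symm⟩

/-- Let `h : ℝ² → ℝ` be continuous, let `a, b ∈ ℝ³` be linearly
independent, and let `c ∈ ℝ³` be non-zero and orthogonal to `a` and `b`.  Suppose
`h(x₁ + a·m, x₂ + b·m) = h(x₁,x₂) + d·m` for all `m ∈ ℤ³`.  Then `d = k₁a + k₂b` for
some reals `k₁, k₂`, the function `h̃(x₁,x₂) = h(x₁,x₂) − k₁x₁ − k₂x₂` is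
`(a·m, b·m)`-periodic for all `m ∈ ℤ³`, and:
if `rank G(c) = 0` then `h̃` is constant; if `rank G(c) = 1` then
`h̃(x₁,x₂) = ρ(l₁x₁ + l₂x₂)` for a continuous `1`-periodic `ρ` with
`l₁a + l₂b ∈ ℤ³` a generator of `G(c)`; if `rank G(c) = 2` then `c ∈ c'ℤ³`, `c' ≠ 0`. -/
theorem stmt_17
    (h : ℝ → ℝ → ℝ) (hcont : Continuous (Function.uncurry h))
    (a b c : Fin 3 → ℝ) (hab : LinearIndependent ℝ ![a, b]) (hc : c ≠ 0)
    (hca : c ⬝ᵥ a = 0) (hcb : c ⬝ᵥ b = 0)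
    (d : Fin 3 → ℝ)
    (hper : ∀ (m : Fin 3 → ℤ) (x₁ x₂ : ℝ),
      h (x₁ + a ⬝ᵥ fun i => (m i : ℝ)) (x₂ + b ⬝ᵥ fun i => (m i : ℝ))
        = h x₁ x₂ + d ⬝ᵥ fun i => (m i : ℝ)) :
    ∃ (k₁ k₂ : ℝ) (ht : ℝ → ℝ → ℝ),
      d = k₁ • a + k₂ • b ∧
      ht = (fun x₁ x₂ => h x₁ x₂ - k₁ * x₁ - k₂ * x₂) ∧
      (∀ (m : Fin 3 → ℤ) (x₁ x₂ : ℝ),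
        ht (x₁ + a ⬝ᵥ fun i => (m i : ℝ)) (x₂ + b ⬝ᵥ fun i => (m i : ℝ)) = ht x₁ x₂) ∧
      -- rank G(c) = 0 case
      ((∀ m : Fin 3 → ℤ, (c ⬝ᵥ fun i => (m i : ℝ)) = 0 → m = 0) →
        ∃ C : ℝ, ∀ x₁ x₂ : ℝ, ht x₁ x₂ = C) ∧
      -- rank G(c) = 1 case
      ((∃ m₀ : Fin 3 → ℤ, m₀ ≠ 0 ∧ (c ⬝ᵥ fun i => (m₀ i : ℝ)) = 0 ∧
          ∀ m : Fin 3 → ℤ, (c ⬝ᵥ fun i => (m i : ℝ)) = 0 → ∃ z : ℤ, m = z • m₀) →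
        ∃ (l₁ l₂ : ℝ) (ρ : ℝ → ℝ) (m₀ : Fin 3 → ℤ),
          Continuous ρ ∧ (∀ t : ℝ, ρ (t + 1) = ρ t) ∧
          (∀ x₁ x₂ : ℝ, ht x₁ x₂ = ρ (l₁ * x₁ + l₂ * x₂)) ∧
          (fun i => (m₀ i : ℝ)) = l₁ • a + l₂ • b ∧
          m₀ ≠ 0 ∧ (c ⬝ᵥ fun i => (m₀ i : ℝ)) = 0 ∧
          (∀ m : Fin 3 → ℤ, (c ⬝ᵥ fun i => (m i : ℝ)) = 0 → ∃ z : ℤ, m = z • m₀)) ∧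
      -- rank G(c) = 2 case
      ((∃ m₁ m₂ : Fin 3 → ℤ, (c ⬝ᵥ fun i => (m₁ i : ℝ)) = 0 ∧
          (c ⬝ᵥ fun i => (m₂ i : ℝ)) = 0 ∧
          LinearIndependent ℝ ![fun i => (m₁ i : ℝ), fun i => (m₂ i : ℝ)]) →
        ∃ c' : ℝ, c' ≠ 0 ∧ ∀ i, ∃ z : ℤ, c i = c' * z) := by
  obtain ⟨k₁, k₂, hd⟩ := exists_smul_add_smul_eq_of_dotProduct_eq_zero hab hc hca hcb
    (dotProduct_comm c d ▸ dotProduct_eq_zero_of_quasiperiodic hcont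
      (dotProduct_comm a c ▸ hca) (dotProduct_comm b c ▸ hcb) hper)
  set ht : ℝ → ℝ → ℝ := fun x₁ x₂ => h x₁ x₂ - k₁ * x₁ - k₂ * x₂
  have hper' : ∀ (m : Fin 3 → ℤ) (x₁ x₂ : ℝ),
      ht (x₁ + a ⬝ᵥ fun i => (m i : ℝ)) (x₂ + b ⬝ᵥ fun i => (m i : ℝ)) = ht x₁ x₂ := by
    intro m x₁ x₂
    simp only [ht, hper, ← hd, add_dotProduct, smul_dotProduct, smul_eq_mul]
    ring
  have hU : Continuous (Function.uncurry ht) :=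
    (hcont.sub (continuous_const.mul continuous_fst)).sub (continuous_const.mul continuous_snd)
  have hT : ∀ m : Fin 3 → ℤ, (a ⬝ᵥ (fun i => (m i : ℝ)), b ⬝ᵥ (fun i => (m i : ℝ))) ∈
      periods (Function.uncurry ht) := fun m x => hper' m x.1 x.2
  refine ⟨k₁, k₂, ht, hd.symm, rfl, hper', fun hG => ?_, fun ⟨m₀, hm₀, hcm₀, hG⟩ => ?_,
    fun ⟨m₁, m₂, h₁, h₂, hli⟩ => exists_eq_mul_int_of_linearIndependent hc h₁ h₂ hli⟩
  · rcases (periods _).eq_top_or_exists_ker_le_of_forall_dotProduct_mem hab hc hca hcb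
      (eq_zero_of_cast_eq_smul_of_forall_eq_zero hG) (isClosed_periods hU) hT with
      htop | ⟨l₁, l₂, n, hn0, hn, -⟩
    · exact ⟨ht 0 0, fun x₁ x₂ => eq_of_periods_eq_top htop (x₁, x₂) (0, 0)⟩
    · exact absurd (hG n (by simp [hn, dotProduct_add, hca, hcb])) hn0
  · obtain ⟨l₁, l₂, ρ, hρ, hρper, hUρ, hl⟩ :=
      exists_periodic_of_forall_eq_zsmul hab hc hca hcb hU hT hm₀ hcm₀ hG
    exact ⟨l₁, l₂, ρ, m₀, hρ, hρper, fun x₁ x₂ => hUρ (x₁, x₂), hl, hm₀, hcm₀, hG⟩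

end
end

section
/- Let c ∈ Z^3 \ {0}. Then there exists a pair of generators a, b ∈ Z^3 of the group G(c) = { m ∈ Z^3 : m ⊥ c } such that Λ(a, b) := { (a·m, b·m) ∈ Z^2 : m ∈ Z^3 } = Z^2. Moreover, for ANY pair of generators a', b' ∈ Z^3 of G(c), one has Λ(a', b') = Z^2. -/
/-!
Write `c = d • (h q₀, h q₁, p)` with `q₀, q₁` coprime and `h, p` coprime. Bézout coefficients
`x q₀ + y q₁ = 1` and `z h + w p = 1` give the rows `a = (q₁, -q₀, 0)` and `b = (x p, y p, -h)`
orthogonal to `c`, and `u = (x z, y z, w)` with `c ⬝ᵥ u = d`, of a matrix of determinant one.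
Unimodularity makes `a, b` a basis of `G(c)` and makes `m ↦ (a ⬝ᵥ m, b ⬝ᵥ m)` surjective.
Any other basis `a', b'` of `G(c)` arises from `a, b` through an invertible `2 × 2` integer
matrix `P`, and `m ↦ (a' ⬝ᵥ m, b' ⬝ᵥ m)` is the previous map followed by `P`.
-/

open Matrix

noncomputable section

/-- `m` is an integer vector orthogonal to `c`, i.e. `m ∈ G(c)`. -/
def inGc (c m : Fin 3 → ℤ) : Prop := c ⬝ᵥ m = 0

/-- `a, b` is a pair of generators (a `ℤ`-basis) of the group `G(c) = {m : m ⊥ c}`. -/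
def GeneratorPair (c a b : Fin 3 → ℤ) : Prop :=
  inGc c a ∧ inGc c b ∧ LinearIndependent ℤ ![a, b] ∧
    ∀ m : Fin 3 → ℤ, inGc c m → ∃ s t : ℤ, m = s • a + t • b

/-- `Λ(a,b) = {(a·m, b·m) : m ∈ ℤ³}`. -/
def Lam (a b : Fin 3 → ℤ) : Set (ℤ × ℤ) :=
  Set.range fun m : Fin 3 → ℤ => (a ⬝ᵥ m, b ⬝ᵥ m)

namespace Matrix

theorem vecMul_of_three_rows {R : Type*} [Semiring R] (a b u v : Fin 3 → R) :
    v ᵥ* of ![a, b, u] = v 0 • a + v 1 • b + v 2 • u := by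
  ext j
  simp [vecMul, dotProduct, Fin.sum_univ_three]

variable {R : Type*} [CommRing R] {m n : Type*} [Fintype m]

theorem eq_of_mul_eq_mul_of_vecMul_injective {A : Matrix m n R} (hA : Function.Injective A.vecMul)
    {P Q : Matrix m m R} (h : P * A = Q * A) : P = Q :=
  funext fun i => hA (congrFun h i)

theorem mulVec_surjective_mul [DecidableEq m] [Fintype n] {P : Matrix m m R} {A : Matrix m n R}
    (hP : IsUnit P) (hA : Function.Surjective A.mulVec) : Function.Surjective (P * A).mulVec := by
  simpa only [Function.comp_def, mulVec_mulVec] using (mulVec_surjective_iff_isUnit.2 hP).comp hA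

end Matrix

theorem Int.exists_mul_mul_isCoprime (m n : ℤ) :
    ∃ g q r : ℤ, m = g * q ∧ n = g * r ∧ IsCoprime q r := by
  by_cases h : m = 0 ∧ n = 0
  · exact ⟨0, 1, 0, by simp [h.1], by simp [h.2], isCoprime_one_left⟩
  · obtain ⟨g, q, r, -, hqr, hm, hn⟩ := Int.exists_gcd_one' (Int.gcd_pos_iff.2 (not_and_or.1 h))
    exact ⟨g, q, r, by rw [hm, mul_comm], by rw [hn, mul_comm], Int.isCoprime_iff_gcd_eq_one.2 hqr⟩

theorem exists_isUnit_of_two_rows_inGc (c : Fin 3 → ℤ) (hc : c ≠ 0) :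
    ∃ a b u : Fin 3 → ℤ, inGc c a ∧ inGc c b ∧ c ⬝ᵥ u ≠ 0 ∧ IsUnit (of ![a, b, u]) := by
  obtain ⟨g, q₀, q₁, hc₀, hc₁, x, y, hxy⟩ := Int.exists_mul_mul_isCoprime (c 0) (c 1)
  obtain ⟨d, h, p, hg, hc₂, z, w, hzw⟩ := Int.exists_mul_mul_isCoprime g (c 2)
  have hc' : c = ![d * h * q₀, d * h * q₁, d * p] := by
    ext i; fin_cases i <;> simp [hc₀, hc₁, hc₂, hg, mul_assoc]
  have hd : d ≠ 0 := by
    rintro rfl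
    exact hc (by rw [hc']; ext i; fin_cases i <;> simp)
  have hu : c ⬝ᵥ ![x * z, y * z, w] = d := by
    simp only [hc', dotProduct, Fin.sum_univ_three, cons_val_zero, cons_val_one, cons_val]
    linear_combination (d * h * z) * hxy + d * hzw
  have hdet : (of ![![q₁, -q₀, 0], ![x * p, y * p, -h], ![x * z, y * z, w]]).det = 1 := by
    simp only [det_fin_three, of_apply, cons_val', cons_val_zero, cons_val_fin_one, cons_val_one,
      cons_val]
    linear_combination (p * w + h * z) * hxy + hzw
  refine ⟨![q₁, -q₀, 0], ![x * p, y * p, -h], ![x * z, y * z, w], ?_, ?_, hu ▸ hd,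
    (isUnit_iff_isUnit_det _).2 (hdet ▸ isUnit_one)⟩
  · simp only [inGc, hc', dotProduct, Fin.sum_univ_three, cons_val_zero, cons_val_one, cons_val]
    ring
  · simp only [inGc, hc', dotProduct, Fin.sum_univ_three, cons_val_zero, cons_val_one, cons_val]
    linear_combination (d * h * p) * hxy

section

variable {c a b u : Fin 3 → ℤ}

theorem generatorPair_of_isUnit (ha : inGc c a) (hb : inGc c b) (hu : c ⬝ᵥ u ≠ 0)
    (hM : IsUnit (of ![a, b, u])) : GeneratorPair c a b := by
  refine ⟨ha, hb, ?_, fun m hm => ?_⟩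
  · have hab : (of ![a, b, u]).row ∘ Fin.castSucc = ![a, b] := by
      ext i; fin_cases i <;> rfl
    exact hab ▸ (linearIndependent_rows_of_isUnit hM).comp _ (Fin.castSucc_injective 2)
  · obtain ⟨v, rfl⟩ : ∃ v, v ᵥ* of ![a, b, u] = m := vecMul_surjective_iff_isUnit.2 hM m
    rw [vecMul_of_three_rows] at hm ⊢
    have hv : v 2 = 0 := by
      simpa only [inGc, dotProduct_add, dotProduct_smul, show c ⬝ᵥ a = 0 from ha,
        show c ⬝ᵥ b = 0 from hb, smul_eq_mul, mul_zero, zero_add, mul_eq_zero, hu,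
        or_false] using hm
    exact ⟨v 0, v 1, by simp [hv]⟩

theorem lam_eq_univ_of_isUnit (hM : IsUnit (of ![a, b, u])) : Lam a b = Set.univ := by
  refine Set.eq_univ_of_forall fun ⟨s, t⟩ => ?_
  obtain ⟨m, hm⟩ := mulVec_surjective_iff_isUnit.2 hM ![s, t, 0]
  exact ⟨m, Prod.ext (congrFun hm 0) (congrFun hm 1)⟩

end

section

variable {c a b a' b' : Fin 3 → ℤ}

theorem lam_eq_univ_iff : Lam a b = Set.univ ↔ Function.Surjective (of ![a, b]).mulVec := by
  rw [Lam, Set.range_eq_univ]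
  exact Equiv.comp_surjective (of ![a, b]).mulVec (finTwoArrowEquiv ℤ)

theorem GeneratorPair.exists_mul_eq (h : GeneratorPair c a b) (ha' : inGc c a') (hb' : inGc c b') :
    ∃ P : Matrix (Fin 2) (Fin 2) ℤ, of ![a', b'] = P * of ![a, b] := by
  obtain ⟨s, t, rfl⟩ := h.2.2.2 a' ha'
  obtain ⟨s', t', rfl⟩ := h.2.2.2 b' hb'
  refine ⟨!![s, t; s', t'], ?_⟩
  ext i j
  fin_cases i <;> simp [mul_apply, Fin.sum_univ_two]

theorem GeneratorPair.lam_eq_univ (h : GeneratorPair c a b) (h' : GeneratorPair c a' b')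
    (hL : Lam a b = Set.univ) : Lam a' b' = Set.univ := by
  obtain ⟨P, hP⟩ := h.exists_mul_eq h'.1 h'.2.1
  obtain ⟨Q, hQ⟩ := h'.exists_mul_eq h.1 h.2.1
  have hQP : Q * P = 1 := by
    have hinj : Function.Injective (of ![a, b]).vecMul := vecMul_injective_iff.2 h.2.2.1
    refine eq_of_mul_eq_mul_of_vecMul_injective hinj ?_
    rw [Matrix.mul_assoc, ← hP, ← hQ, Matrix.one_mul]
  rw [lam_eq_univ_iff] at hL ⊢
  rw [hP]
  exact mulVec_surjective_mul (IsUnit.of_mul_eq_one_right Q hQP) hL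

end

/-- For every non-zero `c ∈ ℤ³` there is a pair of generators
`a, b` of `G(c) = {m ∈ ℤ³ : m ⊥ c}` with `Λ(a,b) = ℤ²`; moreover for ANY pair of
generators `a', b'` of `G(c)` one has `Λ(a',b') = ℤ²`. -/
theorem stmt_18 (c : Fin 3 → ℤ) (hc : c ≠ 0) :
    (∃ a b : Fin 3 → ℤ, GeneratorPair c a b ∧ Lam a b = Set.univ) ∧
    (∀ a' b' : Fin 3 → ℤ, GeneratorPair c a' b' → Lam a' b' = Set.univ) := by
  obtain ⟨a, b, u, ha, hb, hu, hM⟩ := exists_isUnit_of_two_rows_inGc c hc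
  have hab := generatorPair_of_isUnit ha hb hu hM
  have hL := lam_eq_univ_of_isUnit hM
  exact ⟨⟨a, b, hab, hL⟩, fun a' b' h' => hab.lam_eq_univ h' hL⟩

end
end
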